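/- arXiv:2305.02188 — 2 statements merged into one kernel-verified Lean document; each statement's English description precedes it below -/
import Mathlib

section
/- Let q ≥ 2 be an integer and define the q-th Fuss–Catalan numbers c_N = (1/((q−1)N+1))·binom(qN, N) ∈ ℚ. Then the formal power series C(X) = Σ_{N≥0} c_N X^N ∈ ℚ⟦X⟧ satisfies the algebraic equation C = 1 + X·C^q. -/
/-!
The powers `C^s` have the Raney numbers `A_s(N) = s / (qN + s) · C(qN + s, N)` as coefficients.
These satisfy the Pascal-type rule `A_{s+1}(N+1) = A_s(N+1) + A_{s+q}(N)`, so their generating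
series satisfy `R_{s+1} = R_s + X R_{s+q}` with `R_0 = 1`. Such a recurrence determines the whole
family from its first member; both `s ↦ R_1 R_s` and `s ↦ R_{s+1}` obey it, hence
`R_1 R_s = R_{s+1}` and `R_s = R_1^s`. Since `R_1 = C`, the case `s = 0` is `C = 1 + X C^q`.
-/

open PowerSeries

theorem PowerSeries.eq_of_succ_eq_add_X_mul {R : Type*} [Semiring R] (q : ℕ)
    {F G : ℕ → R⟦X⟧} (h0 : F 0 = G 0) (hF : ∀ s, F (s + 1) = F s + X * F (s + q))
    (hG : ∀ s, G (s + 1) = G s + X * G (s + q)) : F = G := by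
  suffices h : ∀ N s, coeff N (F s) = coeff N (G s) from funext fun s => ext fun N => h N s
  intro N
  induction N using Nat.strong_induction_on with
  | _ N ihN =>
    intro s
    induction s with
    | zero => rw [h0]
    | succ s ihs =>
      rw [hF, hG, map_add, map_add, ihs]
      rcases N with _ | N
      · simp only [coeff_zero_X_mul]
      · rw [coeff_succ_X_mul, coeff_succ_X_mul, ihN N N.lt_succ_self]

/-- The case `N = 0` is split off so that `raney q 0 0 = 1` rather than `0 / 0`. -/
def raney (q s : ℕ) : ℕ → ℚ
  | 0 => 1
  | N + 1 => s / (q * (N + 1) + s : ℕ) * (q * (N + 1) + s).choose (N + 1)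

lemma raney_eq {q s N : ℕ} (h : q * N + s ≠ 0) :
    raney q s N = s / (q * N + s : ℕ) * (q * N + s).choose N := by
  rcases N with _ | N
  · have hs : (s : ℚ) ≠ 0 := by simpa using h
    simp [raney, hs]
  · rfl

lemma raney_one {q : ℕ} (hq : 0 < q) (N : ℕ) :
    raney q 1 N = 1 / ((q - 1) * N + 1) * (q * N).choose N := by
  have hN : N ≤ q * N := Nat.le_mul_of_pos_left N hq
  have key := Nat.choose_mul_succ_eq (q * N) N
  rw [Nat.sub_add_comm hN] at key
  qify [hN] at key
  have hq1 : (1 : ℚ) ≤ q := by exact_mod_cast hq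
  have hd : ((q : ℚ) - 1) * N + 1 ≠ 0 := by positivity
  rw [raney_eq (by omega), div_mul_eq_mul_div, div_mul_eq_mul_div,
    div_eq_div_iff (by positivity) hd]
  push_cast
  linear_combination -key

lemma raney_succ_succ {q : ℕ} (hq : 0 < q) (s N : ℕ) :
    raney q (s + 1) (N + 1) = raney q s (N + 1) + raney q (s + q) N := by
  set n := q * N + q + s
  have e1 : q * (N + 1) + (s + 1) = n + 1 := by ring
  have e2 : q * (N + 1) + s = n := by ring
  have e3 : q * N + (s + q) = n := by ring
  have hn : n ≠ 0 := by omega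
  rw [raney_eq (e1 ▸ n.succ_ne_zero), raney_eq (e2 ▸ hn), raney_eq (e3 ▸ hn), e1, e2, e3]
  have hN : N ≤ n := by have := Nat.le_mul_of_pos_left N hq; omega
  have pascal := Nat.add_one_mul_choose_eq n N
  have step := Nat.choose_succ_right_eq n N
  qify [hN] at pascal step
  have hnQ : (n : ℚ) ≠ 0 := by exact_mod_cast hn
  have hn' : (n : ℚ) = q * N + q + s := by simp [n]
  push_cast
  field_simp
  refine mul_right_cancel₀ (b := (N + 1 : ℚ)) (by positivity) ?_
  linear_combination (s + 1 : ℚ) * n * pascal.symm - (n + 1 : ℚ) * s * step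
    + (n + 1 : ℚ) * (n.choose N) * hn'

lemma mk_raney_zero (q : ℕ) : mk (raney q 0) = 1 := by
  ext (_ | N) <;> simp [raney]

lemma mk_raney_succ {q : ℕ} (hq : 0 < q) (s : ℕ) :
    mk (raney q (s + 1)) = mk (raney q s) + X * mk (raney q (s + q)) := by
  ext (_ | N)
  · simp [raney]
  · rw [map_add, coeff_succ_X_mul, coeff_mk, coeff_mk, coeff_mk, raney_succ_succ hq]

lemma mk_raney_one_mul {q : ℕ} (hq : 0 < q) (s : ℕ) :
    mk (raney q 1) * mk (raney q s) = mk (raney q (s + 1)) := by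
  have h : (fun s ↦ mk (raney q 1) * mk (raney q s)) = fun s ↦ mk (raney q (s + 1)) :=
    eq_of_succ_eq_add_X_mul q (by rw [mk_raney_zero, mul_one])
      (fun t ↦ by rw [mk_raney_succ hq t, mul_add, mul_left_comm])
      (fun t ↦ by rw [mk_raney_succ hq (t + 1), Nat.add_right_comm])
  exact congrFun h s

lemma mk_raney_one_pow {q : ℕ} (hq : 0 < q) (s : ℕ) :
    mk (raney q 1) ^ s = mk (raney q s) := by
  induction s with
  | zero => rw [pow_zero, mk_raney_zero]
  | succ s ih => rw [pow_succ', ih, mk_raney_one_mul hq]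

/-- The generating function `C(X) = Σ_{N≥0} c_N X^N` of the `q`-th Fuss–Catalan numbers
`c_N = (1/((q−1)N+1))·binom(qN, N)` satisfies `C = 1 + X·C^q`. -/
theorem fuss_catalan_generating_function (q : ℕ) (hq : 2 ≤ q) (c : ℕ → ℚ)
    (hc : ∀ N : ℕ, c N = (1 / (((q : ℚ) - 1) * N + 1)) * (Nat.choose (q * N) N : ℚ)) :
    PowerSeries.mk c = 1 + PowerSeries.X * (PowerSeries.mk c) ^ q := by
  have hq0 : 0 < q := by omega
  have hc' : c = raney q 1 := funext fun N => by rw [hc, raney_one hq0]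
  rw [hc', mk_raney_one_pow hq0]
  simpa only [zero_add, mk_raney_zero] using mk_raney_succ hq0 0
end

section
/- For every integer M ≥ 0, the sum over all Dyck words w of semilength 2M of the height of w after its first 2M steps equals binom(2M, M)^2 − catalan(2M), where catalan(n) = (1/(n+1))·binom(2n, n). -/
/-!
Cutting a Dyck path of length `4M` after `2M` steps at height `h` leaves a nonnegative path
from `0` to `h` and one from `h` to `0`; reversing the second, both are counted by the ballot
number `b(2M, h)`. So the sum is `∑ h, h b(2M, h)²`. The same cut without weights gives
`∑ h, b(2M, h)² = b(4M, 0) = C(4M, 2M) - C(4M, 2M + 1) = catalan (2M)`. The remaining sum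
`∑ h, (h + 1) b(2M, h)²` runs over even `h = 2k`, where `b(2M, 2k) = c k - c (k + 1)` with
`c k = C(2M, M + k)`, and it telescopes: from `(M - k) c k = (M + k + 1) c (k + 1)` one gets
`M (2k + 1) (c k - c (k + 1))² = (2k² + M) (c k)² - (2(k + 1)² + M) (c (k + 1))²`,
so it equals `(c 0)² = C(2M, M)²`.
-/

open Finset

section PartialSum

variable {n n₁ n₂ : ℕ}

def partialSum (ε : Fin n → ℤ) (k : ℕ) : ℤ :=
  ∑ i ∈ univ.filter (fun i : Fin n => (i : ℕ) < k), ε i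

lemma partialSum_zero (ε : Fin n → ℤ) : partialSum ε 0 = 0 := by
  simp [partialSum]

lemma partialSum_of_le (ε : Fin n → ℤ) {k : ℕ} (hk : n ≤ k) : partialSum ε k = ∑ i, ε i := by
  rw [partialSum, filter_true_of_mem fun i _ => i.isLt.trans_le hk]

lemma sum_append (x : Fin n₁ → ℤ) (y : Fin n₂ → ℤ) :
    ∑ i, Fin.append x y i = ∑ i, x i + ∑ i, y i := by
  simp [Fin.sum_univ_add]

lemma partialSum_append_of_le (x : Fin n₁ → ℤ) (y : Fin n₂ → ℤ) {k : ℕ} (hk : k ≤ n₁) :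
    partialSum (Fin.append x y) k = partialSum x k := by
  simp only [partialSum, sum_filter, Fin.sum_univ_add, Fin.append_left, Fin.append_right,
    Fin.val_castAdd, Fin.val_natAdd]
  simp [show ∀ i : Fin n₂, ¬ n₁ + i < k from fun i => by omega]

lemma partialSum_append_add (x : Fin n₁ → ℤ) (y : Fin n₂ → ℤ) (k : ℕ) :
    partialSum (Fin.append x y) (n₁ + k) = ∑ i, x i + partialSum y k := by
  simp only [partialSum, sum_filter, Fin.sum_univ_add, Fin.append_left, Fin.append_right,
    Fin.val_castAdd, Fin.val_natAdd, add_lt_add_iff_left]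
  simp [show ∀ i : Fin n₁, (i : ℕ) < n₁ + k from fun i => by omega]

lemma partialSum_append_self (x : Fin n₁ → ℤ) (y : Fin n₂ → ℤ) :
    partialSum (Fin.append x y) n₁ = ∑ i, x i := by
  simpa [partialSum_zero] using partialSum_append_add x y 0

lemma partialSum_neg_rev (ε : Fin n → ℤ) {k : ℕ} (hk : k ≤ n) :
    partialSum (fun i => -ε i.rev) k = partialSum ε (n - k) - ∑ i, ε i := by
  simp only [partialSum, sum_filter]
  rw [← Equiv.sum_comp Fin.revPerm, ← sum_sub_distrib]
  refine sum_congr rfl fun i _ => ?_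
  simp only [Fin.revPerm_apply, Fin.rev_rev, Fin.val_rev]
  split_ifs <;> omega

end PartialSum

def signSeqs (n : ℕ) : Finset (Fin n → ℤ) :=
  Fintype.piFinset fun _ => {1, -1}

lemma mem_signSeqs {n : ℕ} {ε : Fin n → ℤ} : ε ∈ signSeqs n ↔ ∀ i, ε i = 1 ∨ ε i = -1 := by
  simp [signSeqs]

lemma sum_le_of_mem_signSeqs {n : ℕ} {ε : Fin n → ℤ} (hε : ε ∈ signSeqs n) : ∑ i, ε i ≤ n := by
  calc ∑ i, ε i ≤ ∑ _i : Fin n, (1 : ℤ) :=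
        sum_le_sum fun i _ => by rcases mem_signSeqs.1 hε i with h | h <;> omega
    _ = n := by simp

def nonnegPaths (n a b : ℕ) : Finset (Fin n → ℤ) :=
  (signSeqs n).filter fun ε => (∀ k ≤ n, 0 ≤ (a : ℤ) + partialSum ε k) ∧ (a : ℤ) + ∑ i, ε i = b

section NonnegPaths

variable {n n₁ n₂ a b c : ℕ}

lemma mem_nonnegPaths {ε : Fin n → ℤ} :
    ε ∈ nonnegPaths n a b ↔
      ε ∈ signSeqs n ∧ (∀ k ≤ n, 0 ≤ (a : ℤ) + partialSum ε k) ∧ (a : ℤ) + ∑ i, ε i = b :=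
  mem_filter

lemma append_mem_signSeqs_iff {x : Fin n₁ → ℤ} {y : Fin n₂ → ℤ} :
    Fin.append x y ∈ signSeqs (n₁ + n₂) ↔ x ∈ signSeqs n₁ ∧ y ∈ signSeqs n₂ := by
  simp only [mem_signSeqs, Fin.forall_fin_add, Fin.append_left, Fin.append_right]

lemma append_mem_nonnegPaths_iff {x : Fin n₁ → ℤ} {y : Fin n₂ → ℤ} :
    (Fin.append x y ∈ nonnegPaths (n₁ + n₂) a c ∧ (a : ℤ) + ∑ i, x i = b) ↔
      x ∈ nonnegPaths n₁ a b ∧ y ∈ nonnegPaths n₂ b c := by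
  simp only [mem_nonnegPaths, append_mem_signSeqs_iff, sum_append]
  constructor
  · rintro ⟨⟨⟨hx, hy⟩, hprefix, hsum⟩, hb⟩
    refine ⟨⟨hx, fun k hk => ?_, hb⟩, hy, fun k hk => ?_, by linarith⟩
    · simpa [partialSum_append_of_le x y hk] using hprefix k (by omega)
    · have := hprefix (n₁ + k) (by omega)
      rw [partialSum_append_add] at this
      linarith
  · rintro ⟨⟨hx, hprefix₁, hb⟩, hy, hprefix₂, hc⟩
    refine ⟨⟨⟨hx, hy⟩, fun k hk => ?_, by linarith⟩, hb⟩
    rcases le_or_gt k n₁ with hk₁ | hk₁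
    · rw [partialSum_append_of_le x y hk₁]
      exact hprefix₁ k hk₁
    · obtain ⟨j, rfl⟩ := Nat.exists_eq_add_of_le hk₁.le
      rw [partialSum_append_add]
      linarith [hprefix₂ j (by omega)]

lemma neg_rev_mem_nonnegPaths {ε : Fin n → ℤ} (hε : ε ∈ nonnegPaths n a b) :
    (fun i : Fin n => -ε i.rev) ∈ nonnegPaths n b a := by
  obtain ⟨hsign, hprefix, hsum⟩ := mem_nonnegPaths.1 hε
  have htotal : ∑ i : Fin n, -ε i.rev = -∑ i, ε i := by
    rw [← partialSum_of_le _ le_rfl, partialSum_neg_rev ε le_rfl, Nat.sub_self, partialSum_zero,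
      zero_sub]
  refine mem_nonnegPaths.2 ⟨mem_signSeqs.2 fun i => ?_, fun k hk => ?_, by linarith⟩
  · rcases mem_signSeqs.1 hsign i.rev with h | h <;> simp [h]
  · rw [partialSum_neg_rev ε hk]
    linarith [hprefix (n - k) (Nat.sub_le n k)]

lemma card_nonnegPaths_comm : #(nonnegPaths n a b) = #(nonnegPaths n b a) :=
  card_nbij' (fun ε i => -ε i.rev) (fun ε i => -ε i.rev)
    (fun _ => neg_rev_mem_nonnegPaths) (fun _ => neg_rev_mem_nonnegPaths)
    (fun _ _ => by simp) (fun _ _ => by simp)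

lemma sum_nonnegPaths_add {R : Type*} [CommSemiring R] (f : ℤ → R) :
    ∑ ε ∈ nonnegPaths (n₁ + n₂) a c, f (a + partialSum ε n₁) =
      ∑ b ∈ range (a + n₁ + 1), f b * #(nonnegPaths n₁ a b) * #(nonnegPaths n₂ b c) := by
  set height : (Fin (n₁ + n₂) → ℤ) → ℕ := fun ε => ((a : ℤ) + partialSum ε n₁).toNat
  have hmaps : ∀ ε ∈ nonnegPaths (n₁ + n₂) a c, height ε ∈ range (a + n₁ + 1) := by
    intro ε hε
    rw [← Fin.append_castAdd_natAdd (f := ε)] at hε ⊢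
    have hx := (append_mem_signSeqs_iff.1 (mem_nonnegPaths.1 hε).1).1
    have := sum_le_of_mem_signSeqs hx
    simp only [height, partialSum_append_self, mem_range]
    omega
  have hfiber (b : ℕ) : #((nonnegPaths (n₁ + n₂) a c).filter (height · = b)) =
      #(nonnegPaths n₁ a b) * #(nonnegPaths n₂ b c) := by
    rw [← card_product, eq_comm]
    refine card_equiv (Fin.appendEquiv n₁ n₂) fun p => ?_
    rw [mem_product, ← append_mem_nonnegPaths_iff]
    change _ ↔ Fin.append p.1 p.2 ∈ (nonnegPaths _ a c).filter _
    simp only [mem_filter, height, partialSum_append_self]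
    constructor
    · rintro ⟨hp, hb⟩
      exact ⟨hp, by omega⟩
    · rintro ⟨hp, hb⟩
      have := (mem_nonnegPaths.1 hp).2.1 n₁ (by omega)
      rw [partialSum_append_self] at this
      exact ⟨hp, by omega⟩
  rw [← sum_fiberwise_of_maps_to hmaps]
  refine sum_congr rfl fun b _ => ?_
  have hconst : ∀ ε ∈ (nonnegPaths (n₁ + n₂) a c).filter (height · = b),
      f (a + partialSum ε n₁) = f b := by
    intro ε hε
    obtain ⟨hε, hb⟩ := mem_filter.1 hε
    simp only [height] at hb
    have := (mem_nonnegPaths.1 hε).2.1 n₁ (by omega)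
    congr 1
    omega
  rw [sum_congr rfl hconst, sum_const, hfiber, nsmul_eq_mul]
  push_cast
  ring

end NonnegPaths

section NonnegPathsRecurrence

variable {n a b c : ℕ}

lemma card_nonnegPaths_length_zero : #(nonnegPaths 0 a b) = if a = b then 1 else 0 := by
  by_cases h : a = b <;> simp [nonnegPaths, signSeqs, partialSum, h]

lemma const_mem_nonnegPaths_one {z : ℤ} (hz : z = 1 ∨ z = -1) (hbc : (b : ℤ) + z = c) :
    (fun _ => z) ∈ nonnegPaths 1 b c := by
  refine mem_nonnegPaths.2 ⟨mem_signSeqs.2 fun _ => hz, fun k hk => ?_, by simpa using hbc⟩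
  interval_cases k
  · simp [partialSum]
  · simp [partialSum]
    omega

lemma snoc_mem_nonnegPaths_iff {z : ℤ} (hz : z = 1 ∨ z = -1) (hbc : (b : ℤ) + z = c)
    {x : Fin n → ℤ} : Fin.snoc x z ∈ nonnegPaths (n + 1) a c ↔ x ∈ nonnegPaths n a b := by
  have hlast := const_mem_nonnegPaths_one hz hbc
  rw [← Fin.append_right_eq_snoc x fun _ => z]
  refine ⟨fun h => (append_mem_nonnegPaths_iff.1 ⟨h, ?_⟩).1,
    fun hx => (append_mem_nonnegPaths_iff.2 ⟨hx, hlast⟩).1⟩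
  have := (mem_nonnegPaths.1 h).2.2
  rw [sum_append] at this
  simp only [univ_unique, sum_singleton] at this
  linarith

lemma card_filter_last_nonnegPaths {z : ℤ} (hz : z = 1 ∨ z = -1) (hbc : (b : ℤ) + z = c) :
    #((nonnegPaths (n + 1) a c).filter (· (Fin.last n) = z)) = #(nonnegPaths n a b) := by
  refine card_nbij' Fin.init (Fin.snoc · z) (fun ε hε => ?_) (fun x hx => ?_)
    (fun ε hε => ?_) (fun x _ => Fin.init_snoc _ _)
  · obtain ⟨hε, hlast⟩ := mem_filter.1 hε
    rw [← Fin.snoc_init_self ε, hlast] at hε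
    exact (snoc_mem_nonnegPaths_iff hz hbc).1 hε
  · exact mem_filter.2 ⟨(snoc_mem_nonnegPaths_iff hz hbc).2 hx, Fin.snoc_last ..⟩
  · have hlast := (mem_filter.1 hε).2
    simp only [← hlast, Fin.snoc_init_self]

lemma card_nonnegPaths_succ_eq_add (n a c : ℕ) :
    #(nonnegPaths (n + 1) a c) = #((nonnegPaths (n + 1) a c).filter (· (Fin.last n) = 1)) +
      #((nonnegPaths (n + 1) a c).filter (· (Fin.last n) = -1)) := by
  rw [← card_filter_add_card_filter_not (· (Fin.last n) = 1)]
  congr 2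
  refine filter_congr fun ε hε => ?_
  rcases mem_signSeqs.1 (mem_nonnegPaths.1 hε).1 (Fin.last n) with h | h <;> simp [h]

lemma card_nonnegPaths_succ_succ :
    #(nonnegPaths (n + 1) a (c + 1)) = #(nonnegPaths n a c) + #(nonnegPaths n a (c + 2)) := by
  rw [card_nonnegPaths_succ_eq_add,
    card_filter_last_nonnegPaths (b := c) (Or.inl rfl) (by push_cast; ring),
    card_filter_last_nonnegPaths (b := c + 2) (Or.inr rfl) (by push_cast; ring)]

lemma card_nonnegPaths_succ_zero : #(nonnegPaths (n + 1) a 0) = #(nonnegPaths n a 1) := by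
  rw [card_nonnegPaths_succ_eq_add,
    card_filter_last_nonnegPaths (b := 1) (Or.inr rfl) (by norm_num),
    add_eq_right, card_eq_zero, filter_eq_empty_iff]
  intro ε hε hlast
  rw [← Fin.snoc_init_self ε, hlast, ← Fin.append_right_eq_snoc _ fun _ => 1] at hε
  obtain ⟨_, hprefix, hsum⟩ := mem_nonnegPaths.1 hε
  have := hprefix n (by omega)
  simp only [sum_append, partialSum_append_self, univ_unique, sum_singleton] at this hsum
  omega

end NonnegPathsRecurrence

def ballot (n h : ℕ) : ℤ :=
  if Even (n + h) then n.choose ((n + h) / 2) - n.choose ((n + h) / 2 + 1) else 0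

section Ballot

variable {n h m : ℕ}

lemma ballot_of_add_eq_two_mul (hm : n + h = 2 * m) :
    ballot n h = n.choose m - n.choose (m + 1) := by
  simp [ballot, hm]

lemma ballot_of_add_eq_two_mul_add_one (hm : n + h = 2 * m + 1) : ballot n h = 0 := by
  simp [ballot, hm]

lemma ballot_zero_left (h : ℕ) : ballot 0 h = if 0 = h then 1 else 0 := by
  obtain ⟨m, hm | hm⟩ := Nat.even_or_odd' h
  · rcases Nat.eq_zero_or_pos m with rfl | hpos
    · simp [ballot, hm]
    · rw [ballot_of_add_eq_two_mul (m := m) (by omega), if_neg (by omega),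
        Nat.choose_eq_zero_of_lt hpos, Nat.choose_eq_zero_of_lt (by omega)]
      simp
  · rw [ballot_of_add_eq_two_mul_add_one (m := m) (by omega), if_neg (by omega)]

lemma ballot_succ_succ (n h : ℕ) : ballot (n + 1) (h + 1) = ballot n h + ballot n (h + 2) := by
  obtain ⟨m, hm | hm⟩ := Nat.even_or_odd' (n + h)
  · rw [ballot_of_add_eq_two_mul (m := m + 1) (by omega), ballot_of_add_eq_two_mul hm,
      ballot_of_add_eq_two_mul (m := m + 1) (by omega), Nat.choose_succ_succ',
      Nat.choose_succ_succ']
    push_cast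
    ring
  · rw [ballot_of_add_eq_two_mul_add_one (m := m + 1) (by omega),
      ballot_of_add_eq_two_mul_add_one hm, ballot_of_add_eq_two_mul_add_one (m := m + 1) (by omega),
      add_zero]

lemma ballot_succ_zero (n : ℕ) : ballot (n + 1) 0 = ballot n 1 := by
  obtain ⟨m, rfl | rfl⟩ := Nat.even_or_odd' n
  · rw [ballot_of_add_eq_two_mul_add_one (n := 2 * m + 1) (h := 0) rfl,
      ballot_of_add_eq_two_mul_add_one (n := 2 * m) (h := 1) rfl]
  · have hsymm : (2 * m + 1).choose m = (2 * m + 1).choose (m + 1) := by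
      rw [← Nat.choose_symm (by omega : m ≤ 2 * m + 1)]
      congr 1
      omega
    rw [ballot_of_add_eq_two_mul (m := m + 1) (by omega),
      ballot_of_add_eq_two_mul (m := m + 1) (by omega), Nat.choose_succ_succ' (2 * m + 1) m,
      Nat.choose_succ_succ' (2 * m + 1) (m + 1), hsymm]
    push_cast
    ring

end Ballot

lemma card_nonnegPaths_zero_left (n h : ℕ) : (#(nonnegPaths n 0 h) : ℤ) = ballot n h := by
  induction n generalizing h with
  | zero => simp [card_nonnegPaths_length_zero, ballot_zero_left]
  | succ n ih =>
    cases h with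
    | zero => rw [card_nonnegPaths_succ_zero, ballot_succ_zero, ih]
    | succ h => rw [card_nonnegPaths_succ_succ, ballot_succ_succ]; push_cast; rw [ih, ih]

lemma sub_mul_choose (n j : ℕ) : ((n : ℤ) - j) * n.choose j = (j + 1) * n.choose (j + 1) := by
  rcases le_or_gt j n with hj | hj
  · have := Nat.choose_succ_right_eq n j
    zify [hj] at this
    linarith
  · simp [Nat.choose_eq_zero_of_lt hj, Nat.choose_eq_zero_of_lt (hj.trans (Nat.lt_succ_self j))]

lemma mul_two_mul_add_one_mul_sub_choose_sq (M k : ℕ) :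
    (M : ℤ) * ((2 * k + 1) * ((2 * M).choose (M + k) - (2 * M).choose (M + k + 1) : ℤ) ^ 2) =
      (2 * k ^ 2 + M) * ((2 * M).choose (M + k) : ℤ) ^ 2 -
        (2 * ((k + 1 : ℕ) : ℤ) ^ 2 + M) * ((2 * M).choose (M + (k + 1)) : ℤ) ^ 2 := by
  have hratio := sub_mul_choose (2 * M) (M + k)
  push_cast at hratio ⊢
  rw [← add_assoc]
  linear_combination (2 * (k : ℤ) * (2 * M).choose (M + k) -
    2 * ((k : ℤ) + 1) * (2 * M).choose (M + k + 1)) * hratio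

lemma sum_two_mul_add_one_mul_sub_choose_sq (M : ℕ) :
    ∑ k ∈ range (M + 1), (2 * k + 1) * ((2 * M).choose (M + k) - (2 * M).choose (M + k + 1) : ℤ) ^ 2
      = ((2 * M).choose M : ℤ) ^ 2 := by
  rcases Nat.eq_zero_or_pos M with rfl | hM
  · simp
  refine mul_left_cancel₀ (Nat.cast_ne_zero.2 hM.ne' : (M : ℤ) ≠ 0) ?_
  rw [mul_sum, sum_congr rfl fun k _ => mul_two_mul_add_one_mul_sub_choose_sq M k,
    sum_range_sub' (fun k => (2 * (k : ℤ) ^ 2 + M) * ((2 * M).choose (M + k) : ℤ) ^ 2),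
    Nat.choose_eq_zero_of_lt (by omega : 2 * M < M + (M + 1))]
  simp

lemma sum_range_two_mul_add_one_eq_sum_even {R : Type*} [AddCommMonoid R] (g : ℕ → R)
    (hodd : ∀ k, g (2 * k + 1) = 0) (M : ℕ) :
    ∑ h ∈ range (2 * M + 1), g h = ∑ k ∈ range (M + 1), g (2 * k) := by
  induction M with
  | zero => simp
  | succ M ih =>
    rw [show 2 * (M + 1) + 1 = 2 * M + 1 + 1 + 1 by ring, sum_range_succ, sum_range_succ, ih,
      hodd, add_zero, sum_range_succ _ (M + 1), show 2 * M + 1 + 1 = 2 * (M + 1) by ring]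

lemma sum_partialSum_nonnegPaths (n : ℕ) :
    ∑ ε ∈ nonnegPaths (n + n) 0 0, partialSum ε n = ∑ h ∈ range (n + 1), h * ballot n h ^ 2 := by
  have hsplit := sum_nonnegPaths_add (n₁ := n) (n₂ := n) (a := 0) (c := 0) (fun x : ℤ => x)
  simp only [Nat.cast_zero, zero_add] at hsplit
  rw [hsplit]
  refine sum_congr rfl fun h _ => ?_
  rw [card_nonnegPaths_comm (a := h), card_nonnegPaths_zero_left]
  ring

lemma sum_ballot_sq (n : ℕ) : ∑ h ∈ range (n + 1), ballot n h ^ 2 = ballot (2 * n) 0 := by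
  have hsplit := sum_nonnegPaths_add (n₁ := n) (n₂ := n) (a := 0) (c := 0) (fun _ => (1 : ℤ))
  simp only [sum_const, nsmul_one, zero_add, card_nonnegPaths_zero_left] at hsplit
  rw [two_mul, hsplit]
  refine sum_congr rfl fun h _ => ?_
  rw [card_nonnegPaths_comm (a := h), card_nonnegPaths_zero_left]
  ring

lemma sum_succ_mul_ballot_sq (M : ℕ) :
    ∑ h ∈ range (2 * M + 1), (h + 1) * ballot (2 * M) h ^ 2 = ((2 * M).choose M : ℤ) ^ 2 := by
  have hodd (k : ℕ) : ((2 * k + 1 : ℕ) + 1) * ballot (2 * M) (2 * k + 1) ^ 2 = 0 := by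
    rw [ballot_of_add_eq_two_mul_add_one (m := M + k) (by ring)]
    ring
  rw [sum_range_two_mul_add_one_eq_sum_even _ hodd, ← sum_two_mul_add_one_mul_sub_choose_sq]
  refine sum_congr rfl fun k _ => ?_
  rw [ballot_of_add_eq_two_mul (m := M + k) (by ring)]
  push_cast
  ring

lemma choose_sub_choose_succ_eq_div (n : ℕ) :
    ((2 * n).choose n : ℚ) - (2 * n).choose (n + 1) = 1 / ((n : ℚ) + 1) * (2 * n).choose n := by
  have h := Nat.choose_succ_right_eq (2 * n) n
  rw [show 2 * n - n = n by omega] at h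
  have hq : ((2 * n).choose (n + 1) : ℚ) * (n + 1) = (2 * n).choose n * n := by exact_mod_cast h
  field_simp
  linarith

lemma nonnegPaths_zero_zero (n : ℕ) :
    nonnegPaths n 0 0 = (Fintype.piFinset fun _ : Fin n => ({1, -1} : Finset ℤ)).filter
      (fun ε : Fin n → ℤ => (∀ k : ℕ, k ≤ n →
        0 ≤ ∑ i ∈ Finset.univ.filter (fun i : Fin n => (i : ℕ) < k), ε i) ∧ (∑ i, ε i) = 0) := by
  simp [nonnegPaths, signSeqs, partialSum]

/-- The sum, over all Dyck words of semilength `2M` (encoded as `±1`-sequences of length `4M`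
with total sum `0` and all partial sums nonnegative), of the height after the first `2M`
steps equals `binom(2M, M)^2 − catalan(2M)`, where `catalan(n) = (1/(n+1))·binom(2n, n)`. -/
theorem dyck_middle_height_total_even (M : ℕ) :
    ((∑ ε ∈ (Fintype.piFinset fun _ : Fin (4 * M) => ({1, -1} : Finset ℤ)) |>.filter
          (fun ε : Fin (4 * M) → ℤ =>
            (∀ k : ℕ, k ≤ 4 * M →
              0 ≤ ∑ i ∈ Finset.univ.filter (fun i : Fin (4 * M) => (i : ℕ) < k), ε i) ∧
            (∑ i, ε i) = 0),
        ∑ i ∈ Finset.univ.filter (fun i : Fin (4 * M) => (i : ℕ) < 2 * M), ε i : ℤ) : ℚ) =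
      (Nat.choose (2 * M) M : ℚ) ^ 2 -
        (1 / ((2 * M : ℚ) + 1)) * (Nat.choose (2 * (2 * M)) (2 * M) : ℚ) := by
  rw [show 4 * M = 2 * M + 2 * M by ring, ← nonnegPaths_zero_zero]
  have hsum : ∑ ε ∈ nonnegPaths (2 * M + 2 * M) 0 0, partialSum ε (2 * M) =
      ((2 * M).choose M : ℤ) ^ 2 - ballot (2 * (2 * M)) 0 := by
    rw [sum_partialSum_nonnegPaths, ← sum_succ_mul_ballot_sq, ← sum_ballot_sq, ← sum_sub_distrib]
    exact sum_congr rfl fun h _ => by ring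
  rw [ballot_of_add_eq_two_mul (m := 2 * M) (by ring)] at hsum
  have hcat := choose_sub_choose_succ_eq_div (2 * M)
  push_cast at hcat
  rw [← hcat]
  exact_mod_cast hsum
end
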